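/- arXiv:1903.04668 — 2 statements merged into one kernel-verified Lean document; each statement's English description precedes it below -/
import Mathlib

section
/- Let C ⊆ ℝ^m be a compact set and let f : ℝ^m → ℝ be upper semicontinuous on C and bounded on C (there exist constants M₁ ≤ M₂ with M₁ ≤ f(a) ≤ M₂ for all a ∈ C). Then there exists a sequence of polynomials (p_j)_{j ∈ ℕ} in ℝ[a₁,…,a_m] such that p_j(a) ≥ f(a) for every a ∈ C and every j, and lim_{j → ∞} ∫_C |p_j(a) − f(a)| dμ(a) = 0, where μ is the Lebesgue measure on ℝ^m restricted to C. -/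
/-!
Replace `f` by its `n`-Lipschitz envelopes `gₙ x = sup_{y ∈ C} (f y - n · dist x y)`: these are
continuous, lie between `f` and `sup f` on `C`, and decrease to `f` pointwise on `C` by upper
semicontinuity. Stone–Weierstrass gives polynomials `pₙ` with `gₙ ≤ pₙ ≤ gₙ + 1/(n+1)` on `C`, so
`pₙ ≥ f` and `pₙ → f` pointwise and boundedly on `C`; dominated convergence finishes.
-/

open MeasureTheory Filter

open scoped NNReal ENNReal Topology

theorem UpperSemicontinuousOn.aemeasurable_restrict {X α : Type*} [TopologicalSpace X]
    [MeasurableSpace X] [OpensMeasurableSpace X] [LinearOrder α] [TopologicalSpace α]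
    [OrderTopology α] [SecondCountableTopology α] [MeasurableSpace α] [BorelSpace α]
    {μ : Measure X} {s : Set X} {f : X → α} (hf : UpperSemicontinuousOn f s)
    (hs : MeasurableSet s) : AEMeasurable f (μ.restrict s) :=
  aemeasurable_restrict_of_measurable_subtype hs
    (upperSemicontinuousOn_iff_restrict.2 hf).measurable

section LipschitzEnvelope

variable {X : Type*} [PseudoMetricSpace X] {s : Set X} {f : X → ℝ} {K : ℝ≥0} {M : ℝ} {x : X}

/-- The least `K`-Lipschitz function dominating `f` on `s`, provided `f` is bounded above on `s`
(otherwise the supremum takes its junk value `0`). -/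
noncomputable def lipschitzEnvelope (s : Set X) (f : X → ℝ) (K : ℝ≥0) (x : X) : ℝ :=
  ⨆ y : s, (f y - K * dist x y)

theorem bddAbove_range_sub_mul_dist (hM : ∀ y ∈ s, f y ≤ M) (x : X) :
    BddAbove (Set.range fun y : s => f y - K * dist x y) := by
  refine ⟨M, ?_⟩
  rintro _ ⟨y, rfl⟩
  have := hM y y.2
  have : 0 ≤ (K : ℝ) * dist x y := by positivity
  linarith

theorem le_lipschitzEnvelope (hM : ∀ y ∈ s, f y ≤ M) (hx : x ∈ s) :
    f x ≤ lipschitzEnvelope s f K x := by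
  simpa [lipschitzEnvelope] using le_ciSup (bddAbove_range_sub_mul_dist (K := K) hM x) ⟨x, hx⟩

theorem lipschitzEnvelope_le (hs : s.Nonempty) (hM : ∀ y ∈ s, f y ≤ M) :
    lipschitzEnvelope s f K x ≤ M := by
  have := hs.to_subtype
  refine ciSup_le fun y => ?_
  have := hM y y.2
  have : 0 ≤ (K : ℝ) * dist x y := by positivity
  linarith

theorem lipschitzWith_lipschitzEnvelope (hM : ∀ y ∈ s, f y ≤ M) :
    LipschitzWith K (lipschitzEnvelope s f K) := by
  cases isEmpty_or_nonempty s
  · rw [show lipschitzEnvelope s f K = fun _ => 0 from funext fun x => Real.iSup_of_isEmpty _]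
    exact LipschitzWith.const' 0
  refine LipschitzWith.of_le_add_mul K fun x x' => ciSup_le fun y => ?_
  calc f y - K * dist x y ≤ (f y - K * dist x' y) + K * dist x x' := by
        have := mul_le_mul_of_nonneg_left (dist_triangle_left x' y x) K.coe_nonneg
        linarith
    _ ≤ lipschitzEnvelope s f K x' + K * dist x x' := by
        gcongr; exact le_ciSup (bddAbove_range_sub_mul_dist hM x') y

/-- Far from `x` the penalty `n * dist x y` beats the bound `M`, near `x` upper semicontinuity
keeps `f y` below any level above `f x`. -/
theorem UpperSemicontinuousWithinAt.tendsto_lipschitzEnvelope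
    (hf : UpperSemicontinuousWithinAt f s x) (hx : x ∈ s) (hM : ∀ y ∈ s, f y ≤ M) :
    Tendsto (fun n : ℕ => lipschitzEnvelope s f n x) atTop (𝓝 (f x)) := by
  refine tendsto_order.2 ⟨fun a ha => Eventually.of_forall fun n =>
    ha.trans_le (le_lipschitzEnvelope hM hx), fun b hb => ?_⟩
  obtain ⟨c, hfc, hcb⟩ := exists_between hb
  obtain ⟨δ, hδ, hnear⟩ := Metric.eventually_nhds_iff.1 (eventually_nhdsWithin_iff.1 (hf c hfc))
  filter_upwards [tendsto_natCast_atTop_atTop.eventually_gt_atTop ((M - c) / δ)] with n hn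
  have := Set.nonempty_of_mem hx |>.to_subtype
  refine lt_of_le_of_lt (ciSup_le fun y => ?_) hcb
  simp only [NNReal.coe_natCast]
  rcases lt_or_ge (dist (y : X) x) δ with hyx | hyx
  · have := hnear hyx y.2
    have : 0 ≤ (n : ℝ) * dist x y := by positivity
    linarith
  · rw [div_lt_iff₀ hδ] at hn
    have : (n : ℝ) * δ ≤ n * dist x y := by rw [dist_comm] at hyx; gcongr
    linarith [hM y y.2]

end LipschitzEnvelope

namespace MvPolynomial

variable {σ : Type*} {K : Set (σ → ℝ)} {g : (σ → ℝ) → ℝ}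

theorem exists_near_continuous_of_isCompact (hK : IsCompact K) (hg : Continuous g) {ε : ℝ}
    (hε : 0 < ε) : ∃ p : MvPolynomial σ ℝ, ∀ x ∈ K, |eval x p - g x| < ε := by
  let coord : σ → C(σ → ℝ, ℝ) := fun i => ⟨fun x => x i, continuous_apply i⟩
  have eval_eq (p : MvPolynomial σ ℝ) (x : σ → ℝ) : aeval coord p x = eval x p :=
    comp_aeval_apply coord (ContinuousMap.evalAlgHom ℝ ℝ x) p
  have hsep : (aeval (R := ℝ) coord).range.SeparatesPoints := by
    intro x y hxy
    obtain ⟨i, hi⟩ := Function.ne_iff.1 hxy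
    exact ⟨_, ⟨_, ⟨X i, rfl⟩, rfl⟩, by simpa [coord] using hi⟩
  obtain ⟨_, ⟨p, rfl⟩, hp⟩ :=
    ContinuousMap.exists_mem_subalgebra_near_continuous_of_isCompact_of_separatesPoints hsep
      ⟨g, hg⟩ hK hε
  exact ⟨p, fun x hx => by simpa [eval_eq] using hp x hx⟩

theorem exists_near_continuous_from_above_of_isCompact (hK : IsCompact K) (hg : Continuous g)
    {ε : ℝ} (hε : 0 < ε) :
    ∃ p : MvPolynomial σ ℝ, ∀ x ∈ K, eval x p ∈ Set.Icc (g x) (g x + ε) := by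
  obtain ⟨p, hp⟩ := exists_near_continuous_of_isCompact hK hg (half_pos hε)
  refine ⟨p + C (ε / 2), fun x hx => ?_⟩
  have := abs_lt.1 (hp x hx)
  simp only [eval_add, eval_C, Set.mem_Icc]
  constructor <;> linarith

end MvPolynomial

theorem tendsto_setIntegral_abs_sub_of_tendsto {X : Type*} [MeasurableSpace X] {μ : Measure X}
    {s : Set X} (hs : MeasurableSet s) (hμs : μ s ≠ ∞) {F : ℕ → X → ℝ} {f : X → ℝ}
    (hF : ∀ n, AEStronglyMeasurable (F n) (μ.restrict s))
    (hf : AEStronglyMeasurable f (μ.restrict s)) {B : ℝ} (hB : ∀ n, ∀ x ∈ s, |F n x - f x| ≤ B)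
    (hlim : ∀ x ∈ s, Tendsto (fun n => F n x) atTop (𝓝 (f x))) :
    Tendsto (fun n => ∫ x in s, |F n x - f x| ∂μ) atTop (𝓝 0) := by
  have := tendsto_integral_of_dominated_convergence (μ := μ.restrict s)
    (F := fun n x => |F n x - f x|) (fun _ => B) (fun n => ((hF n).sub hf).norm)
    (integrableOn_const hμs)
    (fun n => ae_restrict_of_forall_mem hs fun x hx => by simpa using hB n x hx)
    (ae_restrict_of_forall_mem hs fun x hx => by simpa using ((hlim x hx).sub_const (f x)).abs)
  simpa using this

theorem polynomial_approx_from_above_usc_general {m : ℕ}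
    (C : Set (Fin m → ℝ)) (hC : IsCompact C)
    (f : (Fin m → ℝ) → ℝ) (hf : UpperSemicontinuousOn f C)
    (M₁ M₂ : ℝ) (hbd : ∀ a ∈ C, M₁ ≤ f a ∧ f a ≤ M₂) :
    ∃ p : ℕ → MvPolynomial (Fin m) ℝ,
      (∀ j : ℕ, ∀ a ∈ C, f a ≤ MvPolynomial.eval a (p j)) ∧
      Tendsto (fun j : ℕ =>
          ∫ a, |MvPolynomial.eval a (p j) - f a| ∂(volume.restrict C))
        atTop (nhds 0) := by
  have hM₂ : ∀ a ∈ C, f a ≤ M₂ := fun a ha => (hbd a ha).2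
  choose p hp using fun n : ℕ => MvPolynomial.exists_near_continuous_from_above_of_isCompact hC
    (lipschitzWith_lipschitzEnvelope (K := n) hM₂).continuous (Nat.one_div_pos_of_nat (n := n))
  have hfp : ∀ n, ∀ a ∈ C, f a ≤ MvPolynomial.eval a (p n) := fun n a ha =>
    (le_lipschitzEnvelope hM₂ ha).trans (hp n a ha).1
  refine ⟨p, hfp, tendsto_setIntegral_abs_sub_of_tendsto hC.measurableSet hC.measure_lt_top.ne
    (fun n => (MvPolynomial.continuous_eval _).aestronglyMeasurable)
    (hf.aemeasurable_restrict hC.measurableSet).aestronglyMeasurable (B := M₂ + 1 - M₁)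
    (fun n a ha => ?_) (fun a ha => ?_)⟩
  · have hgM := lipschitzEnvelope_le (K := n) (x := a) ⟨a, ha⟩ hM₂
    have hn : 1 / ((n : ℝ) + 1) ≤ 1 := div_le_one_of_le₀ (by simp) (by positivity)
    rw [abs_of_nonneg (sub_nonneg.2 (hfp n a ha))]
    linarith [(hp n a ha).2, (hbd a ha).1]
  · have hlim := (UpperSemicontinuousWithinAt.tendsto_lipschitzEnvelope (hf a ha) ha hM₂).add
      tendsto_one_div_add_atTop_nhds_zero_nat
    rw [add_zero] at hlim
    exact tendsto_of_tendsto_of_tendsto_of_le_of_le tendsto_const_nhds hlim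
      (fun n => hfp n a ha) (fun n => (hp n a ha).2)

/-- A bounded upper semicontinuous function on a compact set `C ⊆ ℝ^m`
can be approximated from above by polynomials in `L¹(C)`. -/
theorem polynomial_approx_from_above_usc {m : ℕ}
    (C : Set (Fin m → ℝ)) (hC : IsCompact C)
    (f : (Fin m → ℝ) → ℝ) (hf : UpperSemicontinuousOn f C)
    (M₁ M₂ : ℝ) (hM : M₁ ≤ M₂) (hbd : ∀ a ∈ C, M₁ ≤ f a ∧ f a ≤ M₂) :
    ∃ p : ℕ → MvPolynomial (Fin m) ℝ,
      (∀ j : ℕ, ∀ a ∈ C, f a ≤ MvPolynomial.eval a (p j)) ∧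
      Tendsto (fun j : ℕ =>
          ∫ a, |MvPolynomial.eval a (p j) - f a| ∂(volume.restrict C))
        atTop (nhds 0) :=
  polynomial_approx_from_above_usc_general C hC f hf M₁ M₂ hbd
end

section
/- For all real numbers x and y, the following three implications hold: (1) if x² + y² ≤ 1 then x² − 2y² − 3.95998 ≤ 0; (2) if x² + y² ≤ 3 and x² − 2y² − 3.95998 ≤ 0, then (x² + y − 1)² − 2(x²y + y² + 1)² − 3.95998 ≤ 0; (3) if x² + y² ≥ 3 and x² − 2y² − 3.95998 ≤ 0, then x² − 2y² ≤ 4. Consequently, the set {(x,y) ∈ ℝ² : x² − 2y² − 3.95998 ≤ 0} is an invariant certifying the Hoare triple {x² + y² ≤ 1} while (x² + y² ≤ 3) { x := x² + y − 1; y := x·y + y + 1 } {x² − 2y² ≤ 4}, where in the second assignment x denotes the updated value, so that the simultaneous update is (x,y) ↦ (x² + y − 1, x²y + y² + 1). -/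
/-- The set `{(x, y) | x² − 2y² − 3.95998 ≤ 0}` is an invariant certifying
the Hoare triple `{x² + y² ≤ 1} while (x² + y² ≤ 3) {(x, y) := (x² + y − 1, x²y + y² + 1)}
{x² − 2y² ≤ 4}`: the three invariant conditions hold. -/
theorem running_example_invariant :
    (∀ x y : ℝ, x ^ 2 + y ^ 2 ≤ 1 → x ^ 2 - 2 * y ^ 2 - 3.95998 ≤ 0) ∧
    (∀ x y : ℝ, x ^ 2 + y ^ 2 ≤ 3 → x ^ 2 - 2 * y ^ 2 - 3.95998 ≤ 0 →
      (x ^ 2 + y - 1) ^ 2 - 2 * (x ^ 2 * y + y ^ 2 + 1) ^ 2 - 3.95998 ≤ 0) ∧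
    (∀ x y : ℝ, 3 ≤ x ^ 2 + y ^ 2 → x ^ 2 - 2 * y ^ 2 - 3.95998 ≤ 0 →
      x ^ 2 - 2 * y ^ 2 ≤ 4) ∧
    (∀ p : ℝ × ℝ, p.1 ^ 2 + p.2 ^ 2 ≤ 1 →
      p ∈ {q : ℝ × ℝ | q.1 ^ 2 - 2 * q.2 ^ 2 - 3.95998 ≤ 0}) ∧
    (∀ p : ℝ × ℝ, p.1 ^ 2 + p.2 ^ 2 ≤ 3 →
      p ∈ {q : ℝ × ℝ | q.1 ^ 2 - 2 * q.2 ^ 2 - 3.95998 ≤ 0} →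
      (p.1 ^ 2 + p.2 - 1, p.1 ^ 2 * p.2 + p.2 ^ 2 + 1) ∈
        {q : ℝ × ℝ | q.1 ^ 2 - 2 * q.2 ^ 2 - 3.95998 ≤ 0}) ∧
    (∀ p : ℝ × ℝ, 3 ≤ p.1 ^ 2 + p.2 ^ 2 →
      p ∈ {q : ℝ × ℝ | q.1 ^ 2 - 2 * q.2 ^ 2 - 3.95998 ≤ 0} →
      p.1 ^ 2 - 2 * p.2 ^ 2 ≤ 4) := by
  have h1 : ∀ x y : ℝ, x ^ 2 + y ^ 2 ≤ 1 → x ^ 2 - 2 * y ^ 2 - 3.95998 ≤ 0 := by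
    intro x y h; nlinarith [sq_nonneg y]
  have h2 : ∀ x y : ℝ, x ^ 2 + y ^ 2 ≤ 3 → x ^ 2 - 2 * y ^ 2 - 3.95998 ≤ 0 →
      (x ^ 2 + y - 1) ^ 2 - 2 * (x ^ 2 * y + y ^ 2 + 1) ^ 2 - 3.95998 ≤ 0 := by
    intro x y ha hb
    nlinarith [sq_nonneg x, sq_nonneg y, sq_nonneg (x*y), sq_nonneg (x^2*y),
      sq_nonneg (x^2+y), sq_nonneg (x^2-y), sq_nonneg (y-1), sq_nonneg (y+1),
      sq_nonneg (x^2*y+y^2), sq_nonneg (x^2*y - y^2), mul_nonneg (sq_nonneg x) (sq_nonneg y)]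
  have h3 : ∀ x y : ℝ, 3 ≤ x ^ 2 + y ^ 2 → x ^ 2 - 2 * y ^ 2 - 3.95998 ≤ 0 →
      x ^ 2 - 2 * y ^ 2 ≤ 4 := by
    intro x y _ hb; nlinarith
  exact ⟨h1, h2, h3, fun p h => h1 p.1 p.2 h, fun p ha hb => h2 p.1 p.2 ha hb,
    fun p ha hb => h3 p.1 p.2 ha hb⟩
end
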